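/- Let μ, ν : 𝔻 → ℝ be Borel measurable, let z₀, w₀ ∈ 𝔻 and R > 0. Then d^R_{μ,ν}(z₀, w₀) = d^R_{ν,μ}(w₀, z₀) (symmetry of the local distance). -/

import Mathlib

open Complex MeasureTheory ENNReal

noncomputable section

/-- The open unit disk in `ℂ`. -/
def unitDisk : Set ℂ := {z : ℂ | ‖z‖ < 1}

/-- A disk Möbius transformation: `z ↦ τ (z - a)/(1 - conj a · z)` with `a ∈ 𝔻`, `|τ| = 1`. -/
def IsDiskMobius (m : ℂ → ℂ) : Prop :=
  ∃ a τ : ℂ, ‖a‖ < 1 ∧ ‖τ‖ = 1 ∧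
    ∀ z : ℂ, m z = τ * (z - a) / (1 - (starRingEnd ℂ) a * z)

/-- The hyperbolic disk `Ω_{z₀,R}` of radius `R` centered at `z₀`. -/
def hypDisk (z₀ : ℂ) (R : ℝ) : Set ℂ :=
  {z : ℂ | ‖z‖ < 1 ∧
    ‖(z - z₀) / (1 - (starRingEnd ℂ) z₀ * z)‖ < Real.tanh R}

/-- The hyperbolic area measure `dvol_H = (1 - |z|²)⁻² dλ` on `ℂ`. -/
def volH : Measure ℂ :=
  volume.withDensity (fun z => ENNReal.ofReal (((1 - ‖z‖ ^ 2) ^ 2)⁻¹))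

/-- The local dissimilarity distance `d^R_{μ,ν}(z₀,w₀)`, valued in `[0,∞]`. -/
def dR (R : ℝ) (μ ν : ℂ → ℝ) (z₀ w₀ : ℂ) : ℝ≥0∞ :=
  ⨅ m : {m : ℂ → ℂ // IsDiskMobius m ∧ m z₀ = w₀},
    ∫⁻ z in hypDisk z₀ R, ENNReal.ofReal |μ z - ν (m.1 z)| ∂volH

/-- The measure on `𝔻` with density `μ` w.r.t. the hyperbolic measure. -/
def muH (μ : ℂ → ℝ) : Measure ℂ :=
  (volH.restrict unitDisk).withDensity (fun z => ENNReal.ofReal (μ z))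

/-- The generalized Kantorovich transportation cost `T^R_d(μ,ν)`. -/
def TRd (R : ℝ) (μ ν : ℂ → ℝ) : ℝ≥0∞ :=
  ⨅ π : {π : Measure (ℂ × ℂ) //
      π.map Prod.fst = muH μ ∧ π.map Prod.snd = muH ν},
    ∫⁻ p, dR R μ ν p.1 p.2 ∂π.1

def aOf (z₀ w₀ σ : ℂ) : ℂ :=
  (z₀ - w₀ * (starRingEnd ℂ) σ) / (1 - (starRingEnd ℂ) z₀ * w₀ * (starRingEnd ℂ) σ)

def tauOf (z₀ w₀ σ : ℂ) : ℂ :=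
  σ * (1 - (starRingEnd ℂ) z₀ * w₀ * (starRingEnd ℂ) σ) / (1 - z₀ * (starRingEnd ℂ) w₀ * σ)

/-- The Möbius transformation `m_{z₀,w₀,σ}`. -/
def stdMobius (z₀ w₀ σ : ℂ) (z : ℂ) : ℂ :=
  tauOf z₀ w₀ σ * (z - aOf z₀ w₀ σ) / (1 - (starRingEnd ℂ) (aOf z₀ w₀ σ) * z)

/-- `Φ(z₀,w₀,σ)`. -/
def Phi (R : ℝ) (μ ν : ℂ → ℝ) (z₀ w₀ σ : ℂ) : ℝ≥0∞ :=
  ∫⁻ z in hypDisk z₀ R, ENNReal.ofReal |μ z - ν (stdMobius z₀ w₀ σ z)| ∂volH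


/-!
Every disk Möbius transformation `m` is an isometry of the pseudo-hyperbolic distance
`|z - w| / |1 - w̄ z|` and preserves `dvol_H`: its Jacobian `|m'(z)|²` equals
`(1 - |m z|²)² / (1 - |z|²)²`. Hence `m` maps `Ω_{z₀,R}` onto `Ω_{m z₀,R}`, and the substitution
`w = m z` shows that the integral defining `d^R_{μ,ν}(z₀, w₀)` at `m` equals the one defining
`d^R_{ν,μ}(w₀, z₀)` at `m⁻¹`, which is again a disk Möbius transformation.
-/

open ComplexConjugate

def diskMobius (a τ z : ℂ) : ℂ := τ * (z - a) / (1 - conj a * z)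

def pseudoHypDist (z w : ℂ) : ℝ := ‖(z - w) / (1 - conj w * z)‖

theorem isDiskMobius_diskMobius {a τ : ℂ} (ha : ‖a‖ < 1) (hτ : ‖τ‖ = 1) :
    IsDiskMobius (diskMobius a τ) :=
  ⟨a, τ, ha, hτ, fun _ => rfl⟩

theorem conj_mul_self_eq_one {τ : ℂ} (hτ : ‖τ‖ = 1) : conj τ * τ = 1 := by
  simp [conj_mul', hτ]

theorem norm_neg_mul_lt_one {a τ : ℂ} (ha : ‖a‖ < 1) (hτ : ‖τ‖ = 1) : ‖-(τ * a)‖ < 1 := by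
  rwa [norm_neg, norm_mul, hτ, one_mul]

theorem one_sub_normSq_pos {z : ℂ} (hz : ‖z‖ < 1) : 0 < 1 - normSq z := by
  rw [normSq_eq_norm_sq, sub_pos]
  exact pow_lt_one₀ (norm_nonneg z) hz two_ne_zero

theorem one_sub_conj_mul_ne_zero {a z : ℂ} (ha : ‖a‖ < 1) (hz : ‖z‖ < 1) :
    1 - conj a * z ≠ 0 := by
  have h : ‖conj a * z‖ < 1 := by
    rw [norm_mul, norm_conj]
    exact mul_lt_one_of_nonneg_of_lt_one_left (norm_nonneg a) ha hz.le
  intro h0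
  rw [← sub_eq_zero.mp h0, norm_one] at h
  exact lt_irrefl 1 h

theorem normSq_one_sub_conj_mul_sub_normSq_sub (a z : ℂ) :
    normSq (1 - conj a * z) - normSq (z - a) = (1 - normSq a) * (1 - normSq z) := by
  simp only [normSq_apply, sub_re, sub_im, mul_re, mul_im, conj_re, conj_im, one_re, one_im]
  ring

section DiskMobius

variable {a τ z w : ℂ}

theorem one_sub_normSq_diskMobius (hτ : ‖τ‖ = 1) (hz : 1 - conj a * z ≠ 0) :
    1 - normSq (diskMobius a τ z)
      = (1 - normSq a) * (1 - normSq z) / normSq (1 - conj a * z) := by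
  have hτ' : normSq τ = 1 := by rw [normSq_eq_norm_sq, hτ, one_pow]
  have hz' : normSq (1 - conj a * z) ≠ 0 := normSq_eq_zero.not.mpr hz
  rw [diskMobius, map_div₀, map_mul, hτ', one_mul, eq_div_iff hz', sub_mul, one_mul,
    div_mul_cancel₀ _ hz', normSq_one_sub_conj_mul_sub_normSq_sub]

theorem norm_diskMobius_lt_one (ha : ‖a‖ < 1) (hτ : ‖τ‖ = 1) (hz : ‖z‖ < 1) :
    ‖diskMobius a τ z‖ < 1 := by
  have hden := one_sub_conj_mul_ne_zero ha hz
  have hpos : 0 < 1 - normSq (diskMobius a τ z) := by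
    rw [one_sub_normSq_diskMobius hτ hden]
    exact div_pos (mul_pos (one_sub_normSq_pos ha) (one_sub_normSq_pos hz))
      (normSq_pos.mpr hden)
  rw [normSq_eq_norm_sq, sub_pos] at hpos
  exact (sq_lt_one_iff₀ (norm_nonneg _)).mp hpos

theorem diskMobius_add_mul (hz : 1 - conj a * z ≠ 0) :
    diskMobius a τ z + τ * a = τ * (1 - conj a * a) * z / (1 - conj a * z) := by
  rw [diskMobius, eq_div_iff hz, add_mul, div_mul_cancel₀ _ hz]
  ring

theorem one_add_conj_mul_diskMobius (hτ : ‖τ‖ = 1) (hz : 1 - conj a * z ≠ 0) :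
    1 + conj τ * conj a * diskMobius a τ z = (1 - conj a * a) / (1 - conj a * z) := by
  have hτ0 : τ ≠ 0 := norm_ne_zero_iff.mp (hτ ▸ one_ne_zero)
  rw [diskMobius, ← inv_eq_conj hτ]
  field_simp
  ring

theorem diskMobius_inv_left (ha : ‖a‖ < 1) (hτ : ‖τ‖ = 1) (hz : ‖z‖ < 1) :
    diskMobius (-(τ * a)) (conj τ) (diskMobius a τ z) = z := by
  have hden := one_sub_conj_mul_ne_zero ha hz
  rw [diskMobius, sub_neg_eq_add, map_neg, map_mul, neg_mul, sub_neg_eq_add,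
    diskMobius_add_mul hden, one_add_conj_mul_diskMobius hτ hden]
  field_simp [one_sub_conj_mul_ne_zero ha ha]
  linear_combination z * conj_mul_self_eq_one hτ

theorem diskMobius_inv_right (ha : ‖a‖ < 1) (hτ : ‖τ‖ = 1) (hw : ‖w‖ < 1) :
    diskMobius a τ (diskMobius (-(τ * a)) (conj τ) w) = w := by
  have h := diskMobius_inv_left (norm_neg_mul_lt_one ha hτ) (by rwa [norm_conj]) hw
  rwa [conj_conj, mul_neg, ← mul_assoc, conj_mul_self_eq_one hτ, one_mul, neg_neg] at h

theorem diskMobius_sub_diskMobius (hz : 1 - conj a * z ≠ 0) (hw : 1 - conj a * w ≠ 0) :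
    diskMobius a τ z - diskMobius a τ w
      = τ * (1 - conj a * a) * (z - w) / ((1 - conj a * z) * (1 - conj a * w)) := by
  rw [diskMobius, diskMobius, div_sub_div _ _ hz hw]
  ring

theorem one_sub_conj_diskMobius_mul_diskMobius (hτ : ‖τ‖ = 1) (hz : 1 - conj a * z ≠ 0)
    (hw : 1 - conj a * w ≠ 0) :
    1 - conj (diskMobius a τ w) * diskMobius a τ z
      = (1 - conj a * a) * (1 - conj w * z) / (conj (1 - conj a * w) * (1 - conj a * z)) := by
  have hw' : conj (1 - conj a * w) ≠ 0 := (map_ne_zero _).mpr hw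
  rw [eq_div_iff (mul_ne_zero hw' hz), diskMobius, diskMobius, map_div₀, sub_mul,
    div_mul_div_comm, div_mul_eq_mul_div, mul_div_cancel_right₀ _ (mul_ne_zero hw' hz)]
  simp only [map_sub, map_mul, map_one, conj_conj]
  linear_combination (conj a - conj w) * (z - a) * conj_mul_self_eq_one hτ

theorem pseudoHypDist_diskMobius (ha : ‖a‖ < 1) (hτ : ‖τ‖ = 1) (hz : ‖z‖ < 1) (hw : ‖w‖ < 1) :
    pseudoHypDist (diskMobius a τ z) (diskMobius a τ w) = pseudoHypDist z w := by
  have hdz := one_sub_conj_mul_ne_zero ha hz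
  have hdw := one_sub_conj_mul_ne_zero ha hw
  have haa := one_sub_conj_mul_ne_zero ha ha
  rw [pseudoHypDist, pseudoHypDist, diskMobius_sub_diskMobius hdz hdw,
    one_sub_conj_diskMobius_mul_diskMobius hτ hdz hdw]
  simp only [norm_div, norm_mul, norm_conj, hτ, one_mul]
  field_simp [norm_ne_zero_iff.mpr hdz, norm_ne_zero_iff.mpr hdw, norm_ne_zero_iff.mpr haa]

theorem image_diskMobius_hypDisk (ha : ‖a‖ < 1) (hτ : ‖τ‖ = 1) {z₀ : ℂ} (hz₀ : ‖z₀‖ < 1)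
    (R : ℝ) : diskMobius a τ '' hypDisk z₀ R = hypDisk (diskMobius a τ z₀) R := by
  ext w
  constructor
  · rintro ⟨z, ⟨hz, hzR⟩, rfl⟩
    refine ⟨norm_diskMobius_lt_one ha hτ hz, ?_⟩
    rwa [← pseudoHypDist, pseudoHypDist_diskMobius ha hτ hz hz₀]
  · rintro ⟨hw, hwR⟩
    have hinv : ‖diskMobius (-(τ * a)) (conj τ) w‖ < 1 :=
      norm_diskMobius_lt_one (norm_neg_mul_lt_one ha hτ) (by rwa [norm_conj]) hw
    refine ⟨_, ⟨hinv, ?_⟩, diskMobius_inv_right ha hτ hw⟩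
    rwa [← pseudoHypDist, ← pseudoHypDist_diskMobius ha hτ hinv hz₀,
      diskMobius_inv_right ha hτ hw]

theorem hasDerivAt_diskMobius (hz : 1 - conj a * z ≠ 0) :
    HasDerivAt (diskMobius a τ) (τ * (1 - conj a * a) / (1 - conj a * z) ^ 2) z := by
  have hnum : HasDerivAt (fun y => τ * (y - a)) τ z := by
    simpa using ((hasDerivAt_id z).sub_const a).const_mul τ
  have hden : HasDerivAt (fun y => 1 - conj a * y) (-conj a) z := by
    simpa using ((hasDerivAt_id z).const_mul (conj a)).const_sub 1
  exact (hnum.div hden hz : HasDerivAt (diskMobius a τ) _ z).congr_deriv (by ring)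

theorem normSq_deriv_diskMobius_mul (ha : ‖a‖ < 1) (hτ : ‖τ‖ = 1) (hz : ‖z‖ < 1) :
    normSq (τ * (1 - conj a * a) / (1 - conj a * z) ^ 2) * ((1 - ‖diskMobius a τ z‖ ^ 2) ^ 2)⁻¹
      = ((1 - ‖z‖ ^ 2) ^ 2)⁻¹ := by
  have hden := one_sub_conj_mul_ne_zero ha hz
  have hτ' : normSq τ = 1 := by rw [normSq_eq_norm_sq, hτ, one_pow]
  have haa : 1 - conj a * a = ((1 - normSq a : ℝ) : ℂ) := by
    rw [mul_comm, mul_conj]; push_cast; ring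
  rw [← normSq_eq_norm_sq, ← normSq_eq_norm_sq, one_sub_normSq_diskMobius hτ hden, map_div₀,
    map_mul, map_pow, hτ', haa, normSq_ofReal]
  have := normSq_pos.mpr hden
  have := one_sub_normSq_pos ha
  have := one_sub_normSq_pos hz
  field_simp

end DiskMobius

theorem det_restrictScalars_toSpanSingleton (c : ℂ) :
    ((ContinuousLinearMap.toSpanSingleton ℂ c).restrictScalars ℝ).det = normSq c := by
  simp [ContinuousLinearMap.det, LinearMap.det_restrictScalars, Algebra.norm_complex_eq]

theorem measurableSet_hypDisk (z₀ : ℂ) (R : ℝ) : MeasurableSet (hypDisk z₀ R) := by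
  rw [hypDisk, Set.ofPred_and]
  refine (measurableSet_lt measurable_norm measurable_const).inter
    (measurableSet_lt ?_ measurable_const)
  exact ((measurable_id.sub_const z₀).div
    (measurable_const.sub (measurable_id.const_mul _))).norm

theorem setLIntegral_volH_image_diskMobius {a τ : ℂ} (ha : ‖a‖ < 1) (hτ : ‖τ‖ = 1) {s : Set ℂ}
    (hs : MeasurableSet s) (hsD : s ⊆ unitDisk) (g : ℂ → ℝ≥0∞) :
    ∫⁻ w in diskMobius a τ '' s, g w ∂volH = ∫⁻ z in s, g (diskMobius a τ z) ∂volH := by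
  have hderiv : ∀ z ∈ s, HasFDerivWithinAt (diskMobius a τ)
      ((ContinuousLinearMap.toSpanSingleton ℂ
        (τ * (1 - conj a * a) / (1 - conj a * z) ^ 2)).restrictScalars ℝ) s z :=
    fun z hz => ((hasDerivAt_diskMobius (one_sub_conj_mul_ne_zero ha (hsD hz))).hasFDerivAt
      |>.restrictScalars ℝ).hasFDerivWithinAt
  have hinj : Set.InjOn (diskMobius a τ) s := fun x hx y hy hxy => by
    rw [← diskMobius_inv_left ha hτ (hsD hx), hxy, diskMobius_inv_left ha hτ (hsD hy)]
  have hdens : Measurable fun z : ℂ => ENNReal.ofReal (((1 - ‖z‖ ^ 2) ^ 2)⁻¹) := by fun_prop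
  -- the density is finite, so the `_non_measurable` forms apply: `g` need not be measurable
  rw [volH, setLIntegral_withDensity_eq_setLIntegral_mul_non_measurable _ hdens _
      (measurable_image_of_fderivWithin hs hderiv hinj) (by simp),
    setLIntegral_withDensity_eq_setLIntegral_mul_non_measurable _ hdens _ hs (by simp),
    lintegral_image_eq_lintegral_abs_det_fderiv_mul volume hs hderiv hinj]
  refine setLIntegral_congr_fun hs fun z hz => ?_
  rw [Pi.mul_apply, Pi.mul_apply, ← mul_assoc, det_restrictScalars_toSpanSingleton,
    abs_of_nonneg (normSq_nonneg _), ← ENNReal.ofReal_mul (normSq_nonneg _),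
    normSq_deriv_diskMobius_mul ha hτ (hsD hz)]

theorem dR_le_dR_swap (μ ν : ℂ → ℝ) {z₀ w₀ : ℂ} (hz₀ : z₀ ∈ unitDisk) (R : ℝ) :
    dR R ν μ w₀ z₀ ≤ dR R μ ν z₀ w₀ := by
  refine le_iInf fun ⟨m, ⟨a, τ, ha, hτ, hm⟩, hmz₀⟩ => ?_
  obtain rfl : m = diskMobius a τ := funext hm
  subst hmz₀
  refine iInf_le_of_le ⟨_, isDiskMobius_diskMobius (norm_neg_mul_lt_one ha hτ)
    (by rwa [norm_conj]), diskMobius_inv_left ha hτ hz₀⟩ (le_of_eq ?_)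
  rw [← image_diskMobius_hypDisk ha hτ hz₀, setLIntegral_volH_image_diskMobius ha hτ
    (measurableSet_hypDisk z₀ R) (fun z hz => hz.1)]
  refine setLIntegral_congr_fun (measurableSet_hypDisk z₀ R) fun z hz => ?_
  dsimp only
  rw [diskMobius_inv_left ha hτ hz.1, abs_sub_comm]

theorem dR_symm_general (μ ν : ℂ → ℝ)
    (z₀ w₀ : ℂ) (hz₀ : z₀ ∈ unitDisk) (hw₀ : w₀ ∈ unitDisk) (R : ℝ) :
    dR R μ ν z₀ w₀ = dR R ν μ w₀ z₀ :=
  le_antisymm (dR_le_dR_swap ν μ hw₀ R) (dR_le_dR_swap μ ν hz₀ R)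

theorem dR_symm (μ ν : ℂ → ℝ) (hμ : Measurable μ) (hν : Measurable ν)
    (z₀ w₀ : ℂ) (hz₀ : z₀ ∈ unitDisk) (hw₀ : w₀ ∈ unitDisk) (R : ℝ) (hR : 0 < R) :
    dR R μ ν z₀ w₀ = dR R ν μ w₀ z₀ :=
  dR_symm_general μ ν z₀ w₀ hz₀ hw₀ R

end
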